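/- Let H be a complex Hilbert space and S an MI-space in B(H). Then for all A, B ∈ S, the commutator [A,B] = AB − BA is itself a scalar multiple of an isometry. -/

import Mathlib

/-- `A` is a scalar multiple of an isometry. -/
def ScalarMultipleOfIsometry {H : Type*} [NormedAddCommGroup H] [InnerProductSpace ℂ H]
    (A : H →L[ℂ] H) : Prop :=
  ∃ (c : ℂ) (V : H →L[ℂ] H), Isometry V ∧ A = c • V

/-!
An operator `T` is a scalar multiple of an isometry exactly when `⟪T x, T y⟫ = r ⟪x, y⟫` for a
constant `r`, i.e. `T† T = r I`. Polarizing this over `A + B` and `A + i B` in an MI-space shows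
that `⟪A x, B y⟫ = μ ⟪x, y⟫`, i.e. `A† B = μ I`, for all `A, B` in the space. Expanding
`⟪[A, B] x, [A, B] x⟫` then leaves only products of such constants, so `[A, B]† [A, B]` is
again a multiple of `I`.
-/

open scoped ComplexInnerProductSpace

section InnerProportional

variable {E F : Type*} [NormedAddCommGroup E] [InnerProductSpace ℂ E]
  [NormedAddCommGroup F] [InnerProductSpace ℂ F]

theorem exists_inner_map_map_eq_mul_inner_of_mem {S : Submodule ℂ (E →L[ℂ] F)}
    (hS : ∀ T ∈ S, ∃ r : ℂ, ∀ x y, ⟪T x, T y⟫ = r * ⟪x, y⟫)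
    {A B : E →L[ℂ] F} (hA : A ∈ S) (hB : B ∈ S) :
    ∃ μ : ℂ, ∀ x y, ⟪A x, B y⟫ = μ * ⟪x, y⟫ := by
  obtain ⟨a, ha⟩ := hS A hA
  obtain ⟨b, hb⟩ := hS B hB
  obtain ⟨g, hg⟩ := hS (A + B) (S.add_mem hA hB)
  obtain ⟨d, hd⟩ := hS (A + Complex.I • B) (S.add_mem hA (S.smul_mem _ hB))
  refine ⟨((g - a - b) - Complex.I * (d - a - b)) / 2, fun x y => ?_⟩
  have hsum := hg x y
  have hrot := hd x y
  simp only [add_apply, smul_apply, inner_add_left, inner_add_right, inner_smul_left,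
    inner_smul_right, Complex.conj_I, ha, hb] at hsum hrot
  linear_combination hsum / 2 - Complex.I / 2 * hrot
    + (⟪A x, B y⟫ - ⟪B x, A y⟫ - b * ⟪x, y⟫ * Complex.I) / 2 * Complex.I_mul_I

end InnerProportional

section ScalarMultipleOfIsometry

variable {H : Type*} [NormedAddCommGroup H] [InnerProductSpace ℂ H] {T : H →L[ℂ] H}

theorem ScalarMultipleOfIsometry.exists_inner_map_map (hT : ScalarMultipleOfIsometry T) :
    ∃ r : ℂ, ∀ x y, ⟪T x, T y⟫ = r * ⟪x, y⟫ := by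
  obtain ⟨c, V, hV, rfl⟩ := hT
  have hV_inner : ∀ x y, ⟪V x, V y⟫ = ⟪x, y⟫ :=
    (LinearMap.norm_map_iff_inner_map_map (V : H →ₗ[ℂ] H)).mp
      (hV.norm_map_of_map_zero (map_zero V))
  refine ⟨starRingEnd ℂ c * c, fun x y => ?_⟩
  rw [smul_apply, smul_apply, inner_smul_left, inner_smul_right, hV_inner, mul_assoc]

theorem ScalarMultipleOfIsometry.of_norm_map_eq_mul {s : ℝ} (hs : 0 ≤ s)
    (h : ∀ x, ‖T x‖ = s * ‖x‖) : ScalarMultipleOfIsometry T := by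
  rcases hs.eq_or_lt with rfl | hs
  · refine ⟨0, ContinuousLinearMap.id ℂ H, isometry_id, ?_⟩
    ext x
    simpa using h x
  · refine ⟨s, (s : ℂ)⁻¹ • T, AddMonoidHomClass.isometry_of_norm _ fun x => ?_, ?_⟩
    · rw [smul_apply, norm_smul, h, norm_inv, Complex.norm_real, Real.norm_of_nonneg hs.le,
        inv_mul_cancel_left₀ hs.ne']
    · rw [smul_smul, mul_inv_cancel₀ (Complex.ofReal_ne_zero.mpr hs.ne'), one_smul]

theorem ScalarMultipleOfIsometry.of_inner_map_self (r : ℂ)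
    (h : ∀ x, ⟪T x, T x⟫ = r * ⟪x, x⟫) : ScalarMultipleOfIsometry T := by
  refine of_norm_map_eq_mul (Real.sqrt_nonneg r.re) fun x => ?_
  have hnorm_sq : ‖T x‖ ^ 2 = r.re * ‖x‖ ^ 2 := by
    rw [← inner_self_eq_norm_sq (𝕜 := ℂ), h, ← inner_self_ofReal_re (𝕜 := ℂ) x,
      ← inner_self_eq_norm_sq (𝕜 := ℂ)]
    exact Complex.re_mul_ofReal _ _
  rw [← Real.sqrt_sq (norm_nonneg (T x)), hnorm_sq, Real.sqrt_mul' _ (sq_nonneg _),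
    Real.sqrt_sq (norm_nonneg x)]

end ScalarMultipleOfIsometry

theorem stmt_16_general {H : Type*} [NormedAddCommGroup H] [InnerProductSpace ℂ H]
    (S : Submodule ℂ (H →L[ℂ] H))
    (hS : ∀ T ∈ S, ScalarMultipleOfIsometry T)
    (A B : H →L[ℂ] H) (hA : A ∈ S) (hB : B ∈ S) :
    ScalarMultipleOfIsometry (A * B - B * A) := by
  have hS' T (hT : T ∈ S) := (hS T hT).exists_inner_map_map
  obtain ⟨a, ha⟩ := hS' A hA
  obtain ⟨b, hb⟩ := hS' B hB
  obtain ⟨μ, hμ⟩ := exists_inner_map_map_eq_mul_inner_of_mem hS' hA hB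
  obtain ⟨ν, hν⟩ := exists_inner_map_map_eq_mul_inner_of_mem hS' hB hA
  refine .of_inner_map_self (2 * a * b - μ * ν - ν * μ) fun x => ?_
  simp only [sub_apply, mul_apply_eq_comp, inner_sub_left, inner_sub_right, ha, hb, hμ, hν]
  ring

theorem stmt_16 {H : Type*} [NormedAddCommGroup H] [InnerProductSpace ℂ H] [CompleteSpace H]
    (S : Submodule ℂ (H →L[ℂ] H))
    (hS : ∀ T ∈ S, ScalarMultipleOfIsometry T)
    (A B : H →L[ℂ] H) (hA : A ∈ S) (hB : B ∈ S) :
    ScalarMultipleOfIsometry (A * B - B * A) :=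
  stmt_16_general S hS A B hA hB
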